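/- Let C be an isomorphism-closed class of uniform spaces that is closed under products and closed under closed subspaces, and suppose C is algebraic, i.e. the full subcategory C of uniform spaces has coequalizers, its underlying-set functor U : C → Set has a left adjoint, and U preserves and reflects regular epimorphisms. Then either C is the class of all indiscrete uniform spaces, or every member of C is separated. -/

import Mathlib

universe u

open Uniformity CategoryTheory CategoryTheory.Limits

/-- A class of uniform spaces (in a fixed universe `u`). -/
abbrev UnifClass := ∀ X : Type u, UniformSpace X → Prop

/-- `C` is closed under uniform isomorphisms. -/
def UnifClass.IsoClosed (C : UnifClass.{u}) : Prop :=
  ∀ (X Y : Type u) (uX : UniformSpace X) (uY : UniformSpace Y),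
    C X uX → Nonempty (@UniformEquiv X Y uX uY) → C Y uY

/-- `C` is closed under arbitrary products (with the product uniformity). -/
def UnifClass.ClosedUnderProducts (C : UnifClass.{u}) : Prop :=
  ∀ (ι : Type u) (X : ι → Type u) (t : ∀ i, UniformSpace (X i)),
    (∀ i, C (X i) (t i)) → C (∀ i, X i) (@Pi.uniformSpace ι X t)

/-- `C` is closed under closed subspaces (uniform embeddings with closed range). -/
def UnifClass.ClosedUnderClosedSubspaces (C : UnifClass.{u}) : Prop :=
  ∀ (X Y : Type u) (uX : UniformSpace X) (uY : UniformSpace Y),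
    C X uX →
    (∃ f : Y → X, @IsUniformEmbedding Y X uY uX f ∧
      @IsClosed X uX.toTopologicalSpace (Set.range f)) → C Y uY

/-- A uniform space is indiscrete if its only entourage is the whole square. -/
def IsIndiscreteUnif (X : Type u) (uX : UniformSpace X) : Prop :=
  ∀ V ∈ @uniformity X uX, V = Set.univ

/-- A uniform space is separated if the intersection of all entourages is the diagonal. -/
def IsSeparatedUnif (X : Type u) (uX : UniformSpace X) : Prop :=
  ∀ x y : X, (∀ V ∈ @uniformity X uX, (x, y) ∈ V) → x = y

/-- The full subcategory of `UniformSpaceCat` determined by a class of uniform spaces. -/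
abbrev UnifClass.Cat (C : UnifClass.{u}) : Type (u + 1) :=
  ObjectProperty.FullSubcategory (fun X : UniformSpaceCat.{u} => C X X.str)

/-- The underlying-set functor of the full subcategory determined by `C`. -/
noncomputable def UnifClass.U (C : UnifClass.{u}) : C.Cat ⥤ Type u :=
  ObjectProperty.ι _ ⋙ forget UniformSpaceCat

/-- A concrete category (over `Type u`) is algebraic if it has coequalizers, its
underlying-set functor has a left adjoint and preserves and reflects regular
epimorphisms. -/
def AlgebraicConcreteCategory {D : Type (u + 1)} [Category.{u} D] (U : D ⥤ Type u) : Prop :=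
  HasCoequalizers D ∧ U.IsRightAdjoint ∧
    (∀ (A B : D) (f : A ⟶ B), Nonempty (RegularEpi f) → Nonempty (RegularEpi (U.map f))) ∧
    (∀ (A B : D) (f : A ⟶ B), Nonempty (RegularEpi (U.map f)) → Nonempty (RegularEpi f))

/-! If some member of `C` is not separated, the closure of one of its points is an indiscrete closed
subspace with two points `K`, and the powers `S → K` are indiscrete members of every size. An
indiscrete set `S` is then a quotient in `C` of such a member `M`, along a surjection `g : M → S`:
every map into `M` is uniformly continuous, so the kernel relation of `g` is the joint image of a
parallel pair out of `M × M`. Its coequalizer `q` is surjective because `U` preserves regular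
epimorphisms, indiscrete as a quotient of `M`, and has the fibres of `g` because `j ∘ g` factors
through `q` for a section `j` of `g`. Conversely, for `X ∈ C` the identity of `X` into the
indiscrete space on the same set is sent by `U` to a bijection; as `U` is faithful and reflects
regular epimorphisms, it is a monic regular epimorphism, hence an isomorphism, and `X` is
indiscrete. -/

open Filter Function

lemma isIndiscreteUnif_iff_eq_top {X : Type u} {uX : UniformSpace X} :
    IsIndiscreteUnif X uX ↔ uX = ⊤ :=
  ⟨fun h ↦ UniformSpace.ext <| top_unique fun V hV ↦ mem_top.2 (h V hV),
    fun h V hV ↦ by subst h; exact mem_top.1 hV⟩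

lemma isSeparatedUnif_iff_t0Space {X : Type u} {uX : UniformSpace X} :
    IsSeparatedUnif X uX ↔ T0Space X :=
  t0Space_iff_uniformity.symm

lemma Pi.uniformSpace_top {ι : Type*} (X : ι → Type*) :
    Pi.uniformSpace X (U := fun _ ↦ ⊤) = ⊤ :=
  UniformSpace.ext <| by simp [Pi.uniformity, top_uniformity]

lemma uniformContinuous_top {X Y : Type*} [UniformSpace X] (f : X → Y) :
    UniformContinuous[_, ⊤] f :=
  tendsto_top

lemma UniformSpace.eq_top_of_uniformContinuous_of_surjective {X Y : Type*}
    {uY : UniformSpace Y} {f : X → Y} (hf : UniformContinuous[⊤, uY] f) (hsurj : Surjective f) :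
    uY = ⊤ :=
  UniformSpace.ext <| top_unique <| by
    rw [← (hsurj.prodMap hsurj).filter_map_top]
    exact hf

lemma indiscreteTopology_closure_singleton {X : Type*} [TopologicalSpace X] [R0Space X]
    (x : X) : IndiscreteTopology (closure ({x} : Set X)) :=
  .of_forall_inseparable fun y z ↦ (subtype_inseparable_iff y z).2 <|
    (specializes_iff_mem_closure.2 y.2).inseparable.symm.trans
      (specializes_iff_mem_closure.2 z.2).inseparable

section ConcreteCategory

variable {D : Type*} [Category D] (U : D ⥤ Type u)

lemma surjective_map_of_regularEpi
    (hpres : ∀ (A B : D) (f : A ⟶ B),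
      Nonempty (RegularEpi f) → Nonempty (RegularEpi (U.map f)))
    {A B : D} {f : A ⟶ B} (hf : RegularEpi f) : Surjective (U.map f) := by
  obtain ⟨hUf⟩ := hpres A B f ⟨hf⟩
  exact (epi_iff_surjective _).1 hUf.epi

lemma isIso_of_bijective_map [U.Faithful]
    (hrefl : ∀ (A B : D) (f : A ⟶ B),
      Nonempty (RegularEpi (U.map f)) → Nonempty (RegularEpi f))
    {A B : D} (f : A ⟶ B) (hf : Bijective (U.map f)) : IsIso f := by
  have : IsIso (U.map f) := (isIso_iff_bijective _).2 hf
  obtain ⟨hreg⟩ := hrefl A B f ⟨.ofIso (asIso (U.map f))⟩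
  have : Mono f := U.mono_of_mono_map inferInstance
  exact isIso_of_regularEpi_of_mono f hreg

end ConcreteCategory

lemma exists_jointly_surjective_onto_ker {M S : Type u} (g : M → S) :
    ∃ a b : (ULift.{u} Bool → M) → M, (∀ w, g (a w) = g (b w)) ∧
      ∀ m m', g m = g m' → ∃ w, a w = m ∧ b w = m' := by
  classical
  refine ⟨fun w ↦ w ⟨false⟩,
    fun w ↦ if g (w ⟨false⟩) = g (w ⟨true⟩) then w ⟨true⟩ else w ⟨false⟩, fun w ↦ ?_,
    fun m m' h ↦ ⟨fun i ↦ cond i.down m' m, rfl, if_pos h⟩⟩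
  dsimp only
  split_ifs with h
  exacts [h, rfl]

namespace UnifClass

variable {C : UnifClass.{u}}

instance : C.U.Faithful :=
  inferInstanceAs (ObjectProperty.ι _ ⋙ forget UniformSpaceCat).Faithful

abbrev indiscreteObj {X : Type u} (hX : C X ⊤) : C.Cat :=
  ⟨@UniformSpaceCat.of X ⊤, hX⟩

def homToIndiscrete {A : C.Cat} {X : Type u} (hX : C X ⊤) (f : A.obj → X) :
    A ⟶ indiscreteObj hX :=
  ObjectProperty.homMk ⟨⟨f, uniformContinuous_top f⟩⟩

lemma IsoClosed.mem_top_of_equiv (hiso : C.IsoClosed) {X Y : Type u} (hX : C X ⊤) (e : X ≃ Y) :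
    C Y ⊤ :=
  letI : UniformSpace X := ⊤
  letI : UniformSpace Y := ⊤
  hiso X Y ⊤ ⊤ hX ⟨⟨e, uniformContinuous_top _, uniformContinuous_top _⟩⟩

lemma ClosedUnderProducts.pi_mem_top (hprod : C.ClosedUnderProducts) {M : Type u} (hM : C M ⊤)
    (ι : Type u) : C (ι → M) ⊤ := by
  simpa only [Pi.uniformSpace_top] using hprod ι (fun _ ↦ M) (fun _ ↦ ⊤) fun _ ↦ hM

lemma ClosedUnderClosedSubspaces.subtype_mem (hclsub : C.ClosedUnderClosedSubspaces)
    {X : Type u} [UniformSpace X] (hX : C X ‹_›) {s : Set X} (hs : IsClosed s) :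
    C s instUniformSpaceSubtype :=
  hclsub X s _ _ hX ⟨Subtype.val, isUniformEmbedding_subtype_val, by rwa [Subtype.range_val]⟩

lemma ClosedUnderClosedSubspaces.mem_of_isEmpty (hclsub : C.ClosedUnderClosedSubspaces)
    {K : Type u} {uK : UniformSpace K} (hK : C K uK) (S : Type u) [IsEmpty S]
    (uS : UniformSpace S) : C S uS :=
  hclsub K S uK uS hK ⟨isEmptyElim, ⟨⟨Subsingleton.elim _ _⟩, isEmptyElim⟩, by
    rw [Set.range_eq_empty]; exact isClosed_empty⟩

theorem mem_top_of_surjective (hiso : C.IsoClosed) (hprod : C.ClosedUnderProducts)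
    [HasCoequalizers C.Cat]
    (hpres : ∀ (A B : C.Cat) (f : A ⟶ B),
      Nonempty (RegularEpi f) → Nonempty (RegularEpi (C.U.map f)))
    {M S : Type u} (hM : C M ⊤) {g : M → S} (hg : Surjective g) : C S ⊤ := by
  obtain ⟨a, b, hab, hker⟩ := exists_jointly_surjective_onto_ker g
  have hW := hprod.pi_mem_top hM (ULift.{u} Bool)
  let a' : indiscreteObj hW ⟶ indiscreteObj hM := homToIndiscrete hM a
  let b' : indiscreteObj hW ⟶ indiscreteObj hM := homToIndiscrete hM b
  let q := coequalizer.π a' b'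
  have hq_surj : Surjective (C.U.map q) :=
    surjective_map_of_regularEpi C.U hpres (coequalizerRegular _ _)
  have hq_ker : ∀ m m', g m = g m' → C.U.map q m = C.U.map q m' := by
    intro m m' h
    obtain ⟨w, rfl, rfl⟩ := hker m m' h
    exact congrArg (fun f : indiscreteObj hW ⟶ _ ↦ C.U.map f w)
      (coequalizer.condition a' b')
  let j := surjInv hg
  let d : coequalizer a' b' ⟶ indiscreteObj hM :=
    coequalizer.desc (homToIndiscrete hM (j ∘ g)) (by ext w; exact congrArg j (hab w))
  have hd : ∀ m, C.U.map d (C.U.map q m) = j (g m) := fun m ↦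
    congrArg (fun f : indiscreteObj hM ⟶ _ ↦ C.U.map f m)
      (coequalizer.π_desc _ _ : q ≫ d = _)
  have he : Bijective (C.U.map q ∘ j) := by
    refine ⟨fun s s' h ↦ injective_surjInv hg ?_, fun y ↦ ?_⟩
    · have := (hd (j s)).symm.trans ((congrArg (C.U.map d) h).trans (hd (j s')))
      simp only [j, surjInv_eq hg] at this
      exact this
    · obtain ⟨m, rfl⟩ := hq_surj y
      exact ⟨g m, hq_ker _ _ (surjInv_eq hg _)⟩
  have hQ : (coequalizer a' b').obj.str = ⊤ :=
    UniformSpace.eq_top_of_uniformContinuous_of_surjective q.hom.hom.2 hq_surj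
  exact hiso.mem_top_of_equiv (hQ ▸ (coequalizer a' b').property) (Equiv.ofBijective _ he).symm

theorem mem_top_of_nontrivial (hiso : C.IsoClosed) (hprod : C.ClosedUnderProducts)
    (hclsub : C.ClosedUnderClosedSubspaces) [HasCoequalizers C.Cat]
    (hpres : ∀ (A B : C.Cat) (f : A ⟶ B),
      Nonempty (RegularEpi f) → Nonempty (RegularEpi (C.U.map f)))
    {K : Type u} [Nontrivial K] (hK : C K ⊤) (S : Type u) : C S ⊤ := by
  classical
  cases isEmpty_or_nonempty S
  · exact hclsub.mem_of_isEmpty hK S ⊤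
  obtain ⟨k₀, k₁, hk⟩ := exists_pair_ne K
  have hj : Injective fun (s t : S) ↦ if t = s then k₁ else k₀ := fun s s' h ↦ by
    by_contra hne
    simpa [hne, hk.symm] using congrFun h s
  exact mem_top_of_surjective hiso hprod hpres (hprod.pi_mem_top hK S) (invFun_surjective hj)

lemma eq_top_of_mem_top
    (hrefl : ∀ (A B : C.Cat) (f : A ⟶ B),
      Nonempty (RegularEpi (C.U.map f)) → Nonempty (RegularEpi f))
    {X : Type u} {uX : UniformSpace X} (hX : C X uX) (hXtop : C X ⊤) : uX = ⊤ := by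
  let f : (⟨@UniformSpaceCat.of X uX, hX⟩ : C.Cat) ⟶ indiscreteObj hXtop :=
    homToIndiscrete hXtop id
  have := isIso_of_bijective_map C.U hrefl f bijective_id
  have hinv : ∀ x, C.U.map (inv f) x = x := fun x ↦
    congrArg (fun g : indiscreteObj hXtop ⟶ _ ↦ C.U.map g x) (IsIso.inv_hom_id f)
  exact UniformSpace.eq_top_of_uniformContinuous_of_surjective (inv f).hom.hom.2
    fun x ↦ ⟨x, hinv x⟩

end UnifClass

theorem algebraic_epireflective_Unif_indiscrete_or_separated
    (C : UnifClass.{u}) (hiso : C.IsoClosed)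
    (hprod : C.ClosedUnderProducts) (hclsub : C.ClosedUnderClosedSubspaces)
    (halg : AlgebraicConcreteCategory C.U) :
    (∀ (X : Type u) (uX : UniformSpace X), C X uX ↔ IsIndiscreteUnif X uX) ∨
    (∀ (X : Type u) (uX : UniformSpace X), C X uX → IsSeparatedUnif X uX) := by
  obtain ⟨hcoeq, -, hpres, hrefl⟩ := halg
  refine or_iff_not_imp_right.2 fun hsep ↦ ?_
  push Not at hsep
  obtain ⟨X₀, u₀, hX₀, hns⟩ := hsep
  rw [isSeparatedUnif_iff_t0Space, t0Space_iff_inseparable] at hns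
  push Not at hns
  obtain ⟨x, y, hxy, hne⟩ := hns
  have := indiscreteTopology_closure_singleton x
  have hK : C (closure {x}) ⊤ :=
    IndiscreteTopology.eq_top_uniformSpace (α := closure {x}) ▸
      hclsub.subtype_mem hX₀ isClosed_closure
  have : Nontrivial (closure {x}) :=
    ⟨⟨x, subset_closure rfl⟩, ⟨y, (inseparable_iff_mem_closure.1 hxy).2⟩, by simpa using hne⟩
  have hall := UnifClass.mem_top_of_nontrivial hiso hprod hclsub hpres hK
  intro X uX
  rw [isIndiscreteUnif_iff_eq_top]
  exact ⟨fun hX ↦ UnifClass.eq_top_of_mem_top hrefl hX (hall X), by rintro rfl; exact hall X⟩
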